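/- arXiv:2006.07008 — 3 statements merged into one kernel-verified Lean document; each statement's English description precedes it below -/
import Mathlib

section
/- Let A be a non-negative operator on a complex Banach space X and x ∈ X. Then the limit lim_{t→0⁺} A(t+A)^{-1}x exists in X if and only if x can be written as x = x₀ + x₁ with x₀ ∈ Ker(A) and x₁ ∈ closure of R(A). In that case lim_{t→0⁺} t(t+A)^{-1}x = x₀ and lim_{t→0⁺} A(t+A)^{-1}x = x₁. -/
/-!
For `t > 0` the operators `t R_t` fix `Ker A`, and on `R(A)` they tend to `0` because
`t R_t (A y) = t y - t (t R_t y)`. The uniform bound makes `{t R_t}` equicontinuous, so the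
set where `t R_t x → 0` is closed and contains `closure R(A)`. Since `A R_t x = x - t R_t x`,
this gives both limits for `x = x₀ + x₁`. Conversely, if `A R_t x → y` then `t R_t x → x - y`
while `A (t R_t x) = t A R_t x → 0`; applying the bounded operator `R_1` to
`t R_t x + A (t R_t x)` yields `R_1 (x - y) = x - y`, so `x - y ∈ Ker A`.
-/

open Filter Topology

theorem isClosed_setOf_tendsto_zero_of_eventually_norm_le {𝕜 E F ι : Type*}
    [NontriviallyNormedField 𝕜] [SeminormedAddCommGroup E] [NormedSpace 𝕜 E]
    [SeminormedAddCommGroup F] [NormedSpace 𝕜 F] {l : Filter ι} {T : ι → E →L[𝕜] F} {C : ℝ}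
    (hT : ∀ᶠ i in l, ∀ x, ‖T i x‖ ≤ C * ‖x‖) :
    IsClosed {x | Tendsto (T · x) l (𝓝 0)} := by
  set s := {i | ∀ x, ‖T i x‖ ≤ C * ‖x‖}
  have hequi : Equicontinuous fun i : s ↦ (T i : E → F) := by
    have := (NormedSpace.equicontinuous_TFAE fun i : s ↦ T i).out 1 3
    exact this.mpr ⟨C, fun i ↦ i.2⟩
  have hmap : map Subtype.val (comap Subtype.val l) = l :=
    map_comap_of_mem (by rwa [Subtype.range_coe])
  convert hequi.isClosed_setOfPred_tendsto (l := comap Subtype.val l) (f := 0) continuous_const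
    using 3
  conv_lhs => rw [← hmap]
  exact tendsto_map'_iff

theorem tendsto_ofReal_nhdsGT_zero : Tendsto (fun t : ℝ ↦ (t : ℂ)) (𝓝[>] 0) (𝓝 0) :=
  (Complex.continuous_ofReal.tendsto' 0 0 Complex.ofReal_zero).mono_left nhdsWithin_le_nhds

section Resolvent

variable {X : Type*} [NormedAddCommGroup X] [NormedSpace ℂ X] {dom : Submodule ℂ X}
  {A : dom →ₗ[ℂ] X}

theorem resolvent_apply_map {c : ℂ} {Rc : X →L[ℂ] X}
    (hleft : ∀ x : dom, Rc (c • (x : X) + A x) = x) (y : dom) :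
    Rc (A y) = y - c • Rc y := by
  rw [eq_sub_iff_add_eq', ← map_smul, ← map_add, hleft]

theorem smul_resolvent_eq_self_of_map_eq_zero {c : ℂ} {Rc : X →L[ℂ] X}
    (hleft : ∀ x : dom, Rc (c • (x : X) + A x) = x) {x : dom} (hx : A x = 0) :
    c • Rc x = x := by
  have h := resolvent_apply_map hleft x
  rw [hx, map_zero, eq_comm, sub_eq_zero] at h
  exact h.symm

theorem exists_map_eq_zero_of_resolvent_smul_eq {c : ℂ} {Rc : X →L[ℂ] X}
    (hmem : ∀ x, Rc x ∈ dom) (hright : ∀ x, c • Rc x + A ⟨Rc x, hmem x⟩ = x)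
    {w : X} (hw : Rc (c • w) = w) : ∃ h : w ∈ dom, A ⟨w, h⟩ = 0 := by
  refine ⟨hw ▸ hmem _, ?_⟩
  have := hright (c • w)
  simp only [hw] at this
  exact add_eq_left.mp this

variable {R : ℝ → X →L[ℂ] X} {M : ℝ}

theorem tendsto_smul_resolvent_map
    (hRleft : ∀ t : ℝ, 0 < t → ∀ x : dom, R t ((t : ℂ) • (x : X) + A x) = x)
    (hM : ∀ t : ℝ, 0 < t → ∀ x : X, ‖(t : ℂ) • R t x‖ ≤ M * ‖x‖) (y : dom) :
    Tendsto (fun t : ℝ ↦ (t : ℂ) • R t (A y)) (𝓝[>] 0) (𝓝 0) := by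
  have hexpand : ∀ᶠ t : ℝ in 𝓝[>] 0,
      (t : ℂ) • (y : X) - (t : ℂ) • ((t : ℂ) • R t y) = (t : ℂ) • R t (A y) := by
    filter_upwards [self_mem_nhdsWithin] with t ht
    rw [resolvent_apply_map (hRleft t ht), smul_sub]
  have hbdd : IsBoundedUnder (· ≤ ·) (𝓝[>] 0) (norm ∘ fun t : ℝ ↦ (t : ℂ) • R t y) :=
    ⟨M * ‖(y : X)‖, eventually_map.mpr <| by
      filter_upwards [self_mem_nhdsWithin] with t ht using hM t ht y⟩
  have hc := tendsto_ofReal_nhdsGT_zero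
  refine Tendsto.congr' hexpand ?_
  simpa only [zero_smul, sub_zero] using
    (hc.smul_const (y : X)).sub (hc.zero_smul_isBoundedUnder_le hbdd)

theorem tendsto_smul_resolvent_of_mem_closure_range
    (hRleft : ∀ t : ℝ, 0 < t → ∀ x : dom, R t ((t : ℂ) • (x : X) + A x) = x)
    (hM : ∀ t : ℝ, 0 < t → ∀ x : X, ‖(t : ℂ) • R t x‖ ≤ M * ‖x‖) {x : X}
    (hx : x ∈ closure (Set.range fun y : dom ↦ A y)) :
    Tendsto (fun t : ℝ ↦ (t : ℂ) • R t x) (𝓝[>] 0) (𝓝 0) := by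
  have hclosed := isClosed_setOf_tendsto_zero_of_eventually_norm_le (l := 𝓝[>] 0)
    (T := fun t : ℝ ↦ (t : ℂ) • R t)
    (eventually_nhdsWithin_of_forall fun t ht ↦ hM t ht)
  refine closure_minimal ?_ hclosed hx
  rintro _ ⟨y, rfl⟩
  exact tendsto_smul_resolvent_map hRleft hM y

theorem tendsto_smul_resolvent_add_of_mem_ker
    (hRleft : ∀ t : ℝ, 0 < t → ∀ x : dom, R t ((t : ℂ) • (x : X) + A x) = x)
    (hM : ∀ t : ℝ, 0 < t → ∀ x : X, ‖(t : ℂ) • R t x‖ ≤ M * ‖x‖) {x₀ x₁ : X}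
    (hx₀ : ∃ h : x₀ ∈ dom, A ⟨x₀, h⟩ = 0) (hx₁ : x₁ ∈ closure (Set.range fun y : dom ↦ A y)) :
    Tendsto (fun t : ℝ ↦ (t : ℂ) • R t (x₀ + x₁)) (𝓝[>] 0) (𝓝 x₀) := by
  obtain ⟨hdom, hker⟩ := hx₀
  have hfix : ∀ᶠ t : ℝ in 𝓝[>] 0, x₀ + (t : ℂ) • R t x₁ = (t : ℂ) • R t (x₀ + x₁) := by
    filter_upwards [self_mem_nhdsWithin] with t ht
    rw [map_add, smul_add,
      smul_resolvent_eq_self_of_map_eq_zero (hRleft t ht) (x := ⟨x₀, hdom⟩) hker]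
  simpa only [add_zero] using
    ((tendsto_smul_resolvent_of_mem_closure_range hRleft hM hx₁).const_add x₀).congr' hfix

theorem exists_map_eq_zero_and_sub_mem_closure_range_of_tendsto
    (hRmem : ∀ t : ℝ, 0 < t → ∀ x : X, R t x ∈ dom)
    (hRright : ∀ (t : ℝ) (ht : 0 < t) (x : X), (t : ℂ) • R t x + A ⟨R t x, hRmem t ht x⟩ = x)
    (hRleft : ∀ t : ℝ, 0 < t → ∀ x : dom, R t ((t : ℂ) • (x : X) + A x) = x) {x x₀ : X}
    (hx : Tendsto (fun t : ℝ ↦ (t : ℂ) • R t x) (𝓝[>] 0) (𝓝 x₀)) :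
    (∃ h : x₀ ∈ dom, A ⟨x₀, h⟩ = 0) ∧ x - x₀ ∈ closure (Set.range fun y : dom ↦ A y) := by
  have hA : ∀ t (ht : 0 < t), A ⟨R t x, hRmem t ht x⟩ = x - (t : ℂ) • R t x := fun t ht ↦
    eq_sub_of_add_eq' (hRright t ht x)
  have hsub : Tendsto (fun t : ℝ ↦ x - (t : ℂ) • R t x) (𝓝[>] 0) (𝓝 (x - x₀)) := hx.const_sub x
  have hrange : x - x₀ ∈ closure (Set.range fun y : dom ↦ A y) := by
    refine mem_closure_of_tendsto hsub ?_
    filter_upwards [self_mem_nhdsWithin] with t ht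
    exact ⟨_, hA t ht⟩
  have hAsmul : Tendsto (fun t : ℝ ↦ (t : ℂ) • (x - (t : ℂ) • R t x)) (𝓝[>] 0) (𝓝 0) := by
    simpa only [zero_smul] using tendsto_ofReal_nhdsGT_zero.smul hsub
  have hfix : R 1 (((1 : ℝ) : ℂ) • x₀) = x₀ := by
    have hlim := ((R 1).continuous.tendsto _).comp ((hx.const_smul ((1 : ℝ) : ℂ)).add hAsmul)
    rw [add_zero] at hlim
    refine tendsto_nhds_unique hlim (hx.congr' ?_)
    filter_upwards [self_mem_nhdsWithin] with t ht
    have hmem : (t : ℂ) • R t x ∈ dom := dom.smul_mem _ (hRmem t ht x)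
    have hAt : A ⟨_, hmem⟩ = (t : ℂ) • (x - (t : ℂ) • R t x) := by
      rw [← hA t ht]
      exact map_smul A (t : ℂ) ⟨R t x, hRmem t ht x⟩
    have := hRleft 1 one_pos ⟨_, hmem⟩
    rw [hAt] at this
    exact this.symm
  exact ⟨exists_map_eq_zero_of_resolvent_smul_eq (hRmem 1 one_pos) (hRright 1 one_pos) hfix, hrange⟩

end Resolvent

theorem stmt_9_general
    {X : Type*} [NormedAddCommGroup X] [NormedSpace ℂ X]
    (dom : Submodule ℂ X) (A : dom →ₗ[ℂ] X)
    (R : ℝ → X →L[ℂ] X)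
    (hRmem : ∀ (t : ℝ), 0 < t → ∀ x : X, R t x ∈ dom)
    (hRright : ∀ (t : ℝ) (ht : 0 < t) (x : X),
      (t : ℂ) • R t x + A ⟨R t x, hRmem t ht x⟩ = x)
    (hRleft : ∀ (t : ℝ), 0 < t → ∀ x : dom, R t ((t : ℂ) • (x : X) + A x) = (x : X))
    (M : ℝ)
    (hM : ∀ (t : ℝ), 0 < t → ∀ x : X, ‖(t : ℂ) • R t x‖ ≤ M * ‖x‖)
    (AR : ℝ → X →L[ℂ] X)
    (hAR : ∀ (t : ℝ) (ht : 0 < t) (x : X), AR t x = A ⟨R t x, hRmem t ht x⟩) :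
    ∀ x : X,
      ((∃ y : X, Tendsto (fun t : ℝ => AR t x) (𝓝[>] (0 : ℝ)) (𝓝 y)) ↔
        ∃ x₀ x₁ : X, x = x₀ + x₁ ∧ (∃ h : x₀ ∈ dom, A ⟨x₀, h⟩ = 0) ∧
          x₁ ∈ closure (Set.range fun y : dom => A y)) ∧
      (∀ x₀ x₁ : X, x = x₀ + x₁ → (∃ h : x₀ ∈ dom, A ⟨x₀, h⟩ = 0) →
        x₁ ∈ closure (Set.range fun y : dom => A y) →
        Tendsto (fun t : ℝ => (t : ℂ) • R t x) (𝓝[>] (0 : ℝ)) (𝓝 x₀) ∧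
        Tendsto (fun t : ℝ => AR t x) (𝓝[>] (0 : ℝ)) (𝓝 x₁)) := by
  have hAR_iff : ∀ x y, Tendsto (fun t : ℝ ↦ AR t x) (𝓝[>] 0) (𝓝 y) ↔
      Tendsto (fun t : ℝ ↦ (t : ℂ) • R t x) (𝓝[>] 0) (𝓝 (x - y)) := by
    intro x y
    rw [← tendsto_const_sub_iff x]
    refine tendsto_congr' ?_
    filter_upwards [self_mem_nhdsWithin] with t ht
    rw [hAR t ht x, eq_sub_of_add_eq' (hRright t ht x), sub_sub_cancel]
  have hdecomp : ∀ x₀ x₁ : X, (∃ h : x₀ ∈ dom, A ⟨x₀, h⟩ = 0) →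
      x₁ ∈ closure (Set.range fun y : dom ↦ A y) →
      Tendsto (fun t : ℝ ↦ (t : ℂ) • R t (x₀ + x₁)) (𝓝[>] 0) (𝓝 x₀) ∧
      Tendsto (fun t : ℝ ↦ AR t (x₀ + x₁)) (𝓝[>] 0) (𝓝 x₁) := fun x₀ x₁ h₀ h₁ ↦
    have h := tendsto_smul_resolvent_add_of_mem_ker hRleft hM h₀ h₁
    ⟨h, (hAR_iff _ _).mpr (by rwa [add_sub_cancel_right])⟩
  intro x
  refine ⟨⟨fun ⟨y, hy⟩ ↦ ?_, fun ⟨x₀, x₁, hx, h₀, h₁⟩ ↦ ⟨x₁, hx ▸ (hdecomp x₀ x₁ h₀ h₁).2⟩⟩,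
    fun x₀ x₁ hx h₀ h₁ ↦ hx ▸ hdecomp x₀ x₁ h₀ h₁⟩
  obtain ⟨h₀, h₁⟩ := exists_map_eq_zero_and_sub_mem_closure_range_of_tendsto hRmem hRright hRleft
    ((hAR_iff x y).mp hy)
  exact ⟨x - y, y, (sub_add_cancel x y).symm, h₀, by rwa [sub_sub_cancel] at h₁⟩

theorem stmt_9
    {X : Type*} [NormedAddCommGroup X] [NormedSpace ℂ X] [CompleteSpace X]
    (dom : Submodule ℂ X) (A : dom →ₗ[ℂ] X)
    (R : ℝ → X →L[ℂ] X)
    (hRmem : ∀ (t : ℝ), 0 < t → ∀ x : X, R t x ∈ dom)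
    (hRright : ∀ (t : ℝ) (ht : 0 < t) (x : X),
      (t : ℂ) • R t x + A ⟨R t x, hRmem t ht x⟩ = x)
    (hRleft : ∀ (t : ℝ), 0 < t → ∀ x : dom, R t ((t : ℂ) • (x : X) + A x) = (x : X))
    (M : ℝ)
    (hM : ∀ (t : ℝ), 0 < t → ∀ x : X, ‖(t : ℂ) • R t x‖ ≤ M * ‖x‖)
    (AR : ℝ → X →L[ℂ] X)
    (hAR : ∀ (t : ℝ) (ht : 0 < t) (x : X), AR t x = A ⟨R t x, hRmem t ht x⟩) :
    ∀ x : X,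
      ((∃ y : X, Tendsto (fun t : ℝ => AR t x) (𝓝[>] (0 : ℝ)) (𝓝 y)) ↔
        ∃ x₀ x₁ : X, x = x₀ + x₁ ∧ (∃ h : x₀ ∈ dom, A ⟨x₀, h⟩ = 0) ∧
          x₁ ∈ closure (Set.range fun y : dom => A y)) ∧
      (∀ x₀ x₁ : X, x = x₀ + x₁ → (∃ h : x₀ ∈ dom, A ⟨x₀, h⟩ = 0) →
        x₁ ∈ closure (Set.range fun y : dom => A y) →
        Tendsto (fun t : ℝ => (t : ℂ) • R t x) (𝓝[>] (0 : ℝ)) (𝓝 x₀) ∧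
        Tendsto (fun t : ℝ => AR t x) (𝓝[>] (0 : ℝ)) (𝓝 x₁)) :=
  stmt_9_general dom A R hRmem hRright hRleft M hM AR hAR
end

section
/- Let A be a non-negative operator on a complex Banach space X and let x belong to (closure of D(A)) ∩ (closure of R(A)). Then the improper Bochner integral ∫₀^∞ A(t+A)^{-2}x dt converges (as a limit of ∫_ε^N as ε → 0⁺ and N → ∞) and equals x. -/
/-!
With `R t = (t + A)⁻¹`, the integrand is `A R(t)² x = R(t) x - t R(t)² x`, which is the derivative
of `t ↦ t R(t) x` because `R' = -R²` by the resolvent identity. So the integral over `[ε, N]` is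
`N R(N) x - ε R(ε) x`. The operators `t R(t)` are uniformly bounded, so both limits only need to be
checked on dense sets: for `y ∈ D(A)`, `N R(N) y - y = -R(N) A y = O(1/N)` and
`ε R(ε) A y = ε (y - ε R(ε) y) = O(ε)`.
-/

open MeasureTheory Filter Topology intervalIntegral Set

theorem tendsto_apply_zero_of_mem_closure {ι 𝕜 E F : Type*} [NontriviallyNormedField 𝕜]
    [SeminormedAddCommGroup E] [NormedSpace 𝕜 E] [SeminormedAddCommGroup F] [NormedSpace 𝕜 F]
    {l : Filter ι} {T : ι → E →L[𝕜] F} {C : ℝ} (hT : ∀ᶠ i in l, ‖T i‖ ≤ C) {s : Set E}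
    (hs : ∀ y ∈ s, Tendsto (fun i ↦ T i y) l (𝓝 0)) {x : E} (hx : x ∈ closure s) :
    Tendsto (fun i ↦ T i x) l (𝓝 0) := by
  rw [Metric.tendsto_nhds]
  intro δ hδ
  have hC : 0 < |C| + 1 := by positivity
  obtain ⟨y, hys, hxy⟩ := Metric.mem_closure_iff.mp hx (δ / 2 / (|C| + 1)) (by positivity)
  filter_upwards [hT, Metric.tendsto_nhds.mp (hs y hys) (δ / 2) (half_pos hδ)] with i hTi hyi
  rw [dist_eq_norm] at hxy
  rw [dist_zero_right] at hyi ⊢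
  have hTi' : ‖T i‖ ≤ |C| + 1 := by linarith [le_abs_self C]
  calc ‖T i x‖ = ‖T i y + T i (x - y)‖ := by rw [map_sub, add_sub_cancel]
    _ ≤ ‖T i y‖ + (|C| + 1) * ‖x - y‖ :=
      norm_add_le_of_le le_rfl (((T i).le_opNorm _).trans (by gcongr))
    _ < δ / 2 + (|C| + 1) * (δ / 2 / (|C| + 1)) := by gcongr
    _ = δ := by field_simp; ring

/-- `R t = (t + A)⁻¹` for every `t > 0`. -/
structure IsResolventOnIoi {X : Type*} [NormedAddCommGroup X] [NormedSpace ℂ X]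
    {dom : Submodule ℂ X} (A : dom →ₗ[ℂ] X) (R : ℝ → X →L[ℂ] X) : Prop where
  mem : ∀ t : ℝ, 0 < t → ∀ x, R t x ∈ dom
  smul_add_apply : ∀ (t : ℝ) (ht : 0 < t) x, (t : ℂ) • R t x + A ⟨R t x, mem t ht x⟩ = x
  apply_smul_add : ∀ t : ℝ, 0 < t → ∀ x : dom, R t ((t : ℂ) • (x : X) + A x) = x

namespace IsResolventOnIoi

variable {X : Type*} [NormedAddCommGroup X] [NormedSpace ℂ X] {dom : Submodule ℂ X}
  {A : dom →ₗ[ℂ] X} {R : ℝ → X →L[ℂ] X} {K s t : ℝ}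

theorem map_mk_eq_sub (hR : IsResolventOnIoi A R) (ht : 0 < t) (x : X) :
    A ⟨R t x, hR.mem t ht x⟩ = x - t • R t x := by
  rw [eq_sub_iff_add_eq', ← Complex.coe_smul, hR.smul_add_apply t ht x]

theorem apply_map_eq_sub (hR : IsResolventOnIoi A R) (ht : 0 < t) (y : dom) :
    R t (A y) = y - t • R t y := by
  rw [eq_sub_iff_add_eq', ← Complex.coe_smul, ← map_smul, ← map_add, hR.apply_smul_add t ht y]

theorem sub_eq_smul_comp (hR : IsResolventOnIoi A R) (hs : 0 < s) (ht : 0 < t) :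
    R s - R t = (t - s) • (R t).comp (R s) := by
  ext x
  have h := hR.apply_map_eq_sub ht ⟨R s x, hR.mem s hs x⟩
  rw [hR.map_mk_eq_sub hs, map_sub, ContinuousLinearMap.map_smul_of_tower] at h
  simp only [sub_apply, smul_apply, ContinuousLinearMap.comp_apply, sub_smul]
  linear_combination (norm := module) -h

theorem norm_le_div (hK : ∀ t : ℝ, 0 < t → ‖t • R t‖ ≤ K) (ht : 0 < t) : ‖R t‖ ≤ K / t := by
  rw [le_div_iff₀ ht, mul_comm]
  simpa [norm_smul, abs_of_pos ht] using hK t ht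

theorem continuousAt (hR : IsResolventOnIoi A R) (hK : ∀ t : ℝ, 0 < t → ‖t • R t‖ ≤ K)
    (ht : 0 < t) : ContinuousAt R t := by
  have hK0 : 0 ≤ K := (norm_nonneg _).trans (hK 1 one_pos)
  rw [ContinuousAt, tendsto_iff_norm_sub_tendsto_zero]
  have hlin : Tendsto (fun s ↦ |t - s| * (‖R t‖ * (K / (t / 2)))) (𝓝 t) (𝓝 0) :=
    Continuous.tendsto' (by fun_prop) t 0 (by simp)
  refine squeeze_zero' (Eventually.of_forall fun _ ↦ norm_nonneg _) ?_ hlin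
  filter_upwards [Ioi_mem_nhds (half_lt_self ht)] with s hs
  have hs0 : 0 < s := (half_pos ht).trans hs
  rw [hR.sub_eq_smul_comp hs0 ht, norm_smul, Real.norm_eq_abs]
  gcongr
  calc ‖(R t).comp (R s)‖ ≤ ‖R t‖ * ‖R s‖ := ContinuousLinearMap.opNorm_comp_le _ _
    _ ≤ ‖R t‖ * (K / (t / 2)) := by
      gcongr
      exact (norm_le_div hK hs0).trans (div_le_div_of_nonneg_left hK0 (half_pos ht) hs.le)

theorem hasDerivAt_apply (hR : IsResolventOnIoi A R) (hK : ∀ t : ℝ, 0 < t → ‖t • R t‖ ≤ K)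
    (ht : 0 < t) (x : X) : HasDerivAt (fun s ↦ R s x) (-R t (R t x)) t := by
  rw [hasDerivAt_iff_tendsto_slope]
  have hlim : Tendsto (fun s ↦ -R t (R s x)) (𝓝[≠] t) (𝓝 (-R t (R t x))) :=
    (((R t).continuous.tendsto _).comp
      ((hR.continuousAt hK ht).clm_apply continuousAt_const)).neg.mono_left nhdsWithin_le_nhds
  refine hlim.congr' ?_
  filter_upwards [self_mem_nhdsWithin, nhdsWithin_le_nhds (Ioi_mem_nhds ht)] with s hst hs
  rw [slope_def_module, ← sub_apply, hR.sub_eq_smul_comp hs ht,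
    smul_apply, smul_smul, ← neg_sub t, inv_neg, neg_mul,
    inv_mul_cancel₀ (sub_ne_zero.2 (Ne.symm hst)), neg_one_smul, ContinuousLinearMap.comp_apply]

theorem integral_eq_sub [CompleteSpace X] (hR : IsResolventOnIoi A R)
    (hK : ∀ t : ℝ, 0 < t → ‖t • R t‖ ≤ K) {a b : ℝ} (ha : 0 < a) (hb : 0 < b) (x : X) :
    ∫ t in a..b, (R t x - t • R t (R t x)) = b • R b x - a • R a x := by
  have hpos : uIcc a b ⊆ Ioi 0 := fun u hu ↦ (lt_min ha hb).trans_le hu.1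
  have hderiv : ∀ t ∈ uIcc a b,
      HasDerivAt (fun s : ℝ ↦ s • R s x) (R t x - t • R t (R t x)) t := fun t ht ↦ by
    convert (hasDerivAt_id' t).smul (hR.hasDerivAt_apply hK (hpos ht) x) using 1
    · rfl
    · module
  have hcont : ContinuousOn (fun t ↦ R t x - t • R t (R t x)) (uIcc a b) := fun t ht ↦ by
    have hc := hR.continuousAt hK (hpos ht)
    exact ContinuousAt.continuousWithinAt (by fun_prop)
  exact integral_eq_sub_of_hasDerivAt hderiv hcont.intervalIntegrable

theorem tendsto_smul_atTop (hR : IsResolventOnIoi A R) (hK : ∀ t : ℝ, 0 < t → ‖t • R t‖ ≤ K)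
    {x : X} (hx : x ∈ closure (dom : Set X)) :
    Tendsto (fun N : ℝ ↦ N • R N x) atTop (𝓝 x) := by
  have hbound : ∀ᶠ N : ℝ in atTop, ‖N • R N - ContinuousLinearMap.id ℂ X‖ ≤ K + 1 := by
    filter_upwards [eventually_gt_atTop 0] with N hN
    exact (norm_sub_le (N • R N) _).trans
      (add_le_add (hK N hN) (ContinuousLinearMap.norm_id_le (𝕜 := ℂ) (E := X)))
  have hdom : ∀ y ∈ (dom : Set X),
      Tendsto (fun N : ℝ ↦ (N • R N - ContinuousLinearMap.id ℂ X) y) atTop (𝓝 0) := by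
    intro y hy
    have hdecay : Tendsto (fun N : ℝ ↦ K / N * ‖A ⟨y, hy⟩‖) atTop (𝓝 0) := by
      simpa using (tendsto_const_nhds.div_atTop tendsto_id).mul_const ‖A ⟨y, hy⟩‖
    refine squeeze_zero_norm' ?_ hdecay
    filter_upwards [eventually_gt_atTop 0] with N hN
    have h := hR.apply_map_eq_sub hN ⟨y, hy⟩
    rw [sub_apply, smul_apply, ContinuousLinearMap.id_apply,
      ← neg_sub, norm_neg, show y - N • R N y = R N (A ⟨y, hy⟩) from h.symm]
    exact (R N).le_of_opNorm_le (norm_le_div hK hN) _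
  simpa using tendsto_sub_nhds_zero_iff.1
    (tendsto_apply_zero_of_mem_closure hbound hdom hx)

theorem tendsto_smul_nhdsGT_zero (hR : IsResolventOnIoi A R)
    (hK : ∀ t : ℝ, 0 < t → ‖t • R t‖ ≤ K) {x : X} (hx : x ∈ closure (range A)) :
    Tendsto (fun ε : ℝ ↦ ε • R ε x) (𝓝[>] 0) (𝓝 0) := by
  refine tendsto_apply_zero_of_mem_closure (C := K) (T := fun ε : ℝ ↦ ε • R ε)
    (eventually_nhdsWithin_of_forall fun ε hε ↦ hK ε hε) ?_ hx
  rintro _ ⟨y, rfl⟩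
  have hlin : Tendsto (fun ε : ℝ ↦ ε * ((1 + K) * ‖(y : X)‖)) (𝓝[>] 0) (𝓝 0) :=
    (Continuous.tendsto' (f := fun ε : ℝ ↦ ε * ((1 + K) * ‖(y : X)‖))
      (by fun_prop) 0 0 (zero_mul _)).mono_left nhdsWithin_le_nhds
  refine squeeze_zero_norm' ?_ hlin
  filter_upwards [self_mem_nhdsWithin] with ε (hε : 0 < ε)
  rw [smul_apply, hR.apply_map_eq_sub hε, norm_smul, Real.norm_of_nonneg hε.le]
  gcongr
  calc ‖(y : X) - ε • R ε y‖ ≤ ‖(y : X)‖ + K * ‖(y : X)‖ :=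
        norm_sub_le_of_le le_rfl ((ε • R ε).le_of_opNorm_le (hK ε hε) _)
    _ = (1 + K) * ‖(y : X)‖ := by ring

end IsResolventOnIoi

theorem stmt_13
    {X : Type*} [NormedAddCommGroup X] [NormedSpace ℂ X] [CompleteSpace X]
    (dom : Submodule ℂ X) (A : dom →ₗ[ℂ] X)
    (R : ℝ → X →L[ℂ] X)
    (hRmem : ∀ (t : ℝ), 0 < t → ∀ x : X, R t x ∈ dom)
    (hRright : ∀ (t : ℝ) (ht : 0 < t) (x : X),
      (t : ℂ) • R t x + A ⟨R t x, hRmem t ht x⟩ = x)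
    (hRleft : ∀ (t : ℝ), 0 < t → ∀ x : dom, R t ((t : ℂ) • (x : X) + A x) = (x : X))
    (M : ℝ)
    (hM : ∀ (t : ℝ), 0 < t → ∀ x : X, ‖(t : ℂ) • R t x‖ ≤ M * ‖x‖)
    (AR : ℝ → X →L[ℂ] X)
    (hAR : ∀ (t : ℝ) (ht : 0 < t) (x : X), AR t x = A ⟨R t x, hRmem t ht x⟩) :
    ∀ x : X, x ∈ closure (dom : Set X) →
      x ∈ closure (Set.range fun y : dom => A y) →
      Tendsto (fun p : ℝ × ℝ => ∫ t in p.1..p.2, AR t (R t x))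
        ((𝓝[>] (0 : ℝ)) ×ˢ atTop) (𝓝 x) := by
  intro x hdom hrange
  have hR : IsResolventOnIoi A R := ⟨hRmem, hRright, hRleft⟩
  have hK : ∀ t : ℝ, 0 < t → ‖t • R t‖ ≤ max M 0 := fun t ht ↦
    ContinuousLinearMap.opNorm_le_bound _ (le_max_right _ _) fun z ↦ by
      rw [smul_apply, ← Complex.coe_smul]
      exact (hM t ht z).trans (by gcongr; exact le_max_left _ _)
  have hlim := ((hR.tendsto_smul_atTop hK hdom).comp tendsto_snd).sub
    ((hR.tendsto_smul_nhdsGT_zero hK hrange).comp tendsto_fst)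
  rw [sub_zero] at hlim
  refine hlim.congr' ?_
  filter_upwards [prod_mem_prod self_mem_nhdsWithin (Ioi_mem_atTop 0)] with p ⟨hp₁, hp₂⟩
  rw [Function.comp_apply, Function.comp_apply, ← hR.integral_eq_sub hK hp₁ hp₂]
  refine integral_congr fun t ht ↦ ?_
  have ht0 : 0 < t := (lt_min hp₁ hp₂).trans_le ht.1
  exact ((hAR t ht0 _).trans (hR.map_mk_eq_sub ht0 _)).symm
end

section
/- Let 0 < s, α < 1 and 1 ≤ q ≤ ∞. Define T : ℓ^q(ℤ) → ℓ^q(ℤ) by (T a)_j = Σ_{i∈ℤ} K(j,i) a_i with kernel K(j,i) = (2^{-j} 2^{iα})^{1-s} / (1 + 2(2^{-j} 2^{iα}) cos(πα) + (2^{-j} 2^{iα})²). Then T is a bounded linear operator on ℓ^q(ℤ); i.e. there is a constant C = C(s,α) such that ‖T a‖_{ℓ^q} ≤ C ‖a‖_{ℓ^q} for all a ∈ ℓ^q(ℤ). -/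
/-!
With `μ = 2 ^ (i * α - j)` the denominator `1 + 2 μ cos πα + μ²` is at least
`sin² πα * max 1 μ²`, so `K j i ≤ sin⁻² πα * 2 ^ (-(1 - s) * |i * α - j|)`. The points `i * α - j`
form, for fixed `j` resp. fixed `i`, a shifted lattice of spacing `α` resp. `1`, so the row and
column sums of `K` are bounded by geometric series uniformly in the shift. Schur's test, i.e.
the weighted Hölder inequality `(∑ K f)^p ≤ (∑ K)^(p-1) ∑ K f^p` summed over rows, then
bounds `K` on every `ℓ^q`.
-/

open Real
open scoped ENNReal NNReal

namespace ENNReal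

lemma inner_le_weight_mul_Lp_tsum {ι : Type*} {p : ℝ} (hp : 1 ≤ p) (w f : ι → ℝ≥0∞) :
    ∑' i, w i * f i ≤ (∑' i, w i) ^ (1 - p⁻¹) * (∑' i, w i * f i ^ p) ^ p⁻¹ := by
  have hp₁ : 0 ≤ 1 - p⁻¹ := sub_nonneg.2 (inv_le_one_of_one_le₀ hp)
  rw [ENNReal.tsum_eq_iSup_sum]
  refine iSup_le fun s => (inner_le_weight_mul_Lp_of_nonneg s hp w f).trans ?_
  gcongr <;> exact ENNReal.sum_le_tsum s

theorem tsum_rpow_tsum_mul_le {ι κ : Type*} (K : κ → ι → ℝ≥0∞) (f : ι → ℝ≥0∞) {p : ℝ}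
    (hp : 1 ≤ p) {C : ℝ≥0∞} (hrow : ∀ j, ∑' i, K j i ≤ C) (hcol : ∀ i, ∑' j, K j i ≤ C) :
    ∑' j, (∑' i, K j i * f i) ^ p ≤ C ^ p * ∑' i, f i ^ p := by
  have hp₀ : 0 < p := zero_lt_one.trans_le hp
  have hjensen : ∀ j, (∑' i, K j i * f i) ^ p ≤ C ^ (p - 1) * ∑' i, K j i * f i ^ p := by
    intro j
    calc (∑' i, K j i * f i) ^ p
        ≤ ((∑' i, K j i) ^ (1 - p⁻¹) * (∑' i, K j i * f i ^ p) ^ p⁻¹) ^ p := by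
          gcongr; exact inner_le_weight_mul_Lp_tsum hp _ _
      _ = (∑' i, K j i) ^ (p - 1) * ∑' i, K j i * f i ^ p := by
          rw [mul_rpow_of_nonneg _ _ hp₀.le, ← rpow_mul, ← rpow_mul, inv_mul_cancel₀ hp₀.ne',
            rpow_one, sub_mul, one_mul, inv_mul_cancel₀ hp₀.ne']
      _ ≤ C ^ (p - 1) * ∑' i, K j i * f i ^ p := by
          gcongr; exact hrow j
  calc ∑' j, (∑' i, K j i * f i) ^ p
      ≤ ∑' j, C ^ (p - 1) * ∑' i, K j i * f i ^ p := ENNReal.tsum_le_tsum hjensen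
    _ = C ^ (p - 1) * ∑' i, (∑' j, K j i) * f i ^ p := by
        rw [ENNReal.tsum_mul_left, ENNReal.tsum_comm]
        simp_rw [ENNReal.tsum_mul_right]
    _ ≤ C ^ (p - 1) * ∑' i, C * f i ^ p := by gcongr with i; exact hcol i
    _ = C ^ p * ∑' i, f i ^ p := by
        rw [ENNReal.tsum_mul_left, ← mul_assoc]
        congr 1
        simpa using (ENNReal.rpow_add_of_nonneg (x := C) (p - 1) 1 (by linarith) zero_le_one).symm

lemma tsum_pow_natAbs_sub (r : ℝ≥0∞) (m : ℤ) :
    ∑' n : ℤ, r ^ (n - m).natAbs = (1 + r) / (1 - r) := by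
  calc ∑' n : ℤ, r ^ (n - m).natAbs = ∑' n : ℤ, r ^ n.natAbs :=
        (Equiv.subRight m).tsum_eq fun n => r ^ n.natAbs
    _ = ∑' n : ℕ, r ^ n + ∑' n : ℕ, r * r ^ n := by
        rw [tsum_of_nat_of_neg_add_one ENNReal.summable ENNReal.summable]
        congr 1
        refine tsum_congr fun n => ?_
        rw [← pow_succ']
        congr 1
    _ = (1 + r) / (1 - r) := by
        rw [ENNReal.tsum_mul_left, ENNReal.tsum_geometric, div_eq_mul_inv, add_mul, one_mul]

end ENNReal

section

variable {ι κ 𝕜 E : Type*} [NormedField 𝕜] [NormedAddCommGroup E] [NormedSpace 𝕜 E]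
  {q : ℝ≥0∞}

lemma lp.enorm_rpow_eq_tsum [Fact (1 ≤ q)] (hq : 0 < q.toReal) (a : lp (fun _ : ι => E) q) :
    ‖a‖ₑ ^ q.toReal = ∑' i, ‖a i‖ₑ ^ q.toReal := by
  simp_rw [← ofReal_norm, ENNReal.ofReal_rpow_of_nonneg (norm_nonneg _) hq.le,
    lp.norm_rpow_eq_tsum hq]
  exact ENNReal.ofReal_tsum_of_nonneg (fun i => by positivity) ((lp.memℓp a).summable hq)

lemma exists_memℓp_norm_le_of_tsum_enorm_rpow_le (hq : 0 < q.toReal) {b : ι → E} {M : ℝ}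
    (hM : 0 ≤ M) (h : ∑' i, ‖b i‖ₑ ^ q.toReal ≤ ENNReal.ofReal M ^ q.toReal) :
    ∃ hb : Memℓp b q, ‖(⟨b, hb⟩ : lp (fun _ : ι => E) q)‖ ≤ M := by
  have hsum : ∀ s : Finset ι, ∑ i ∈ s, ‖b i‖ ^ q.toReal ≤ M ^ q.toReal := fun s => by
    rw [← ENNReal.ofReal_le_ofReal_iff (by positivity),
      ENNReal.ofReal_sum_of_nonneg (fun _ _ => by positivity),
      ← ENNReal.ofReal_rpow_of_nonneg hM hq.le]
    simp_rw [← ENNReal.ofReal_rpow_of_nonneg (norm_nonneg _) hq.le, ofReal_norm]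
    exact (ENNReal.sum_le_tsum s).trans h
  exact ⟨memℓp_gen' hsum, lp.norm_le_of_forall_sum_le hq hM hsum⟩

theorem lp.schur_test [CompleteSpace E] [Fact (1 ≤ q)] (K : κ → ι → 𝕜) {C : ℝ≥0}
    (hrow : ∀ j, ∑' i, ‖K j i‖ₑ ≤ C) (hcol : ∀ i, ∑' j, ‖K j i‖ₑ ≤ C)
    (a : lp (fun _ : ι => E) q) :
    (∀ j, Summable fun i => K j i • a i) ∧
      ∃ h : Memℓp (fun j => ∑' i, K j i • a i) q,
        ‖(⟨fun j => ∑' i, K j i • a i, h⟩ : lp (fun _ : κ => E) q)‖ ≤ C * ‖a‖ := by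
  have hq : 1 ≤ q := Fact.out
  have hrow_a : ∀ j, ∑' i, ‖K j i‖ₑ * ‖a i‖ₑ ≤ C * ‖a‖ₑ := fun j => by
    calc ∑' i, ‖K j i‖ₑ * ‖a i‖ₑ ≤ ∑' i, ‖K j i‖ₑ * ‖a‖ₑ := by
          gcongr with i
          exact enorm_le_iff_norm_le.2 (lp.norm_apply_le_norm (by positivity) a i)
      _ ≤ C * ‖a‖ₑ := by rw [ENNReal.tsum_mul_right]; gcongr; exact hrow j
  have hT : ∀ j, ‖∑' i, K j i • a i‖ₑ ≤ ∑' i, ‖K j i‖ₑ * ‖a i‖ₑ := fun j => by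
    simpa only [enorm_smul] using enorm_tsum_le_tsum_enorm (f := fun i => K j i • a i)
  have hCa : (C : ℝ≥0∞) * ‖a‖ₑ = ENNReal.ofReal (C * ‖a‖) := by
    rw [ENNReal.ofReal_mul C.coe_nonneg, ENNReal.ofReal_coe_nnreal, ofReal_norm]
  refine ⟨fun j => Summable.of_enorm ?_, ?_⟩
  · simp_rw [enorm_smul]
    exact ((hrow_a j).trans_lt (by finiteness)).ne
  rcases eq_or_ne q ⊤ with rfl | hq_top
  · have hbound : ∀ j, ‖∑' i, K j i • a i‖ ≤ C * ‖a‖ := fun j => by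
      rw [← ENNReal.ofReal_le_ofReal_iff (by positivity), ofReal_norm, ← hCa]
      exact (hT j).trans (hrow_a j)
    exact ⟨memℓp_infty ⟨_, Set.forall_mem_range.2 hbound⟩,
      lp.norm_le_of_forall_le (by positivity) hbound⟩
  · have hp : 1 ≤ q.toReal := by
      simpa using ENNReal.toReal_mono hq_top hq
    have hp₀ : 0 < q.toReal := zero_lt_one.trans_le hp
    refine exists_memℓp_norm_le_of_tsum_enorm_rpow_le hp₀ (by positivity) ?_
    calc ∑' j, ‖∑' i, K j i • a i‖ₑ ^ q.toReal
        ≤ ∑' j, (∑' i, ‖K j i‖ₑ * ‖a i‖ₑ) ^ q.toReal := by gcongr with j; exact hT j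
      _ ≤ C ^ q.toReal * ∑' i, ‖a i‖ₑ ^ q.toReal :=
          ENNReal.tsum_rpow_tsum_mul_le _ _ hp hrow hcol
      _ = ENNReal.ofReal (C * ‖a‖) ^ q.toReal := by
          rw [← hCa, ENNReal.mul_rpow_of_nonneg _ _ hp₀.le, lp.enorm_rpow_eq_tsum hp₀]

end

lemma two_rpow_neg_mul_abs_sub_le {ρ d : ℝ} (hρ : 0 ≤ ρ) (hd : 0 < d) (n : ℤ) (x : ℝ) :
    (2 : ℝ) ^ (-ρ * |n * d - x|) ≤ 2 ^ (ρ * d) * (2 ^ (-ρ * d)) ^ (n - round (x / d)).natAbs := by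
  set m := round (x / d)
  have hdist : d * |(n : ℝ) - m| ≤ |n * d - x| + d := by
    have h₁ : |n * d - x| = d * |n - x / d| := by
      rw [← abs_of_pos hd, ← abs_mul, abs_of_pos hd]
      congr 1
      field_simp
    have h₂ : |(n : ℝ) - m| ≤ |n - x / d| + |x / d - m| := abs_sub_le _ _ _
    have h₃ : |x / d - m| ≤ 1 / 2 := abs_sub_round _
    nlinarith
  rw [← rpow_natCast, ← rpow_mul (by norm_num), ← rpow_add (by norm_num), Nat.cast_natAbs,
    Int.cast_abs, Int.cast_sub]
  apply rpow_le_rpow_of_exponent_le (by norm_num)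
  nlinarith

lemma exists_tsum_two_rpow_neg_mul_abs_sub_le {ρ d : ℝ} (hρ : 0 < ρ) (hd : 0 < d) :
    ∃ L : ℝ≥0, ∀ x : ℝ, ∑' n : ℤ, ENNReal.ofReal (2 ^ (-ρ * |n * d - x|)) ≤ L := by
  set r := ENNReal.ofReal (2 ^ (-ρ * d))
  have hr : r < 1 := by
    rw [ENNReal.ofReal_lt_one]
    exact rpow_lt_one_of_one_lt_of_neg (by norm_num) (by nlinarith)
  have hfin : ENNReal.ofReal (2 ^ (ρ * d)) * ((1 + r) / (1 - r)) ≠ ⊤ := by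
    have : 1 - r ≠ 0 := (tsub_pos_of_lt hr).ne'
    finiteness
  refine ⟨(ENNReal.ofReal (2 ^ (ρ * d)) * ((1 + r) / (1 - r))).toNNReal, fun x => ?_⟩
  rw [ENNReal.coe_toNNReal hfin, ← ENNReal.tsum_pow_natAbs_sub r (round (x / d)),
    ← ENNReal.tsum_mul_left]
  refine ENNReal.tsum_le_tsum fun n => ?_
  rw [← ENNReal.ofReal_pow (by positivity), ← ENNReal.ofReal_mul (by positivity)]
  exact ENNReal.ofReal_le_ofReal (two_rpow_neg_mul_abs_sub_le hρ.le hd n x)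

noncomputable def kernelProfile (s θ μ : ℝ) : ℝ :=
  μ ^ (1 - s) / (1 + 2 * μ * cos θ + μ ^ 2)

lemma sin_sq_le_one_add_two_mul_cos_add_sq (θ μ : ℝ) :
    sin θ ^ 2 ≤ 1 + 2 * μ * cos θ + μ ^ 2 := by
  nlinarith [sin_sq_add_cos_sq θ, sq_nonneg (μ + cos θ)]

lemma sin_sq_mul_sq_le_one_add_two_mul_cos_add_sq (θ μ : ℝ) :
    sin θ ^ 2 * μ ^ 2 ≤ 1 + 2 * μ * cos θ + μ ^ 2 := by
  nlinarith [sin_sq_add_cos_sq θ, sq_nonneg (1 + μ * cos θ)]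

lemma kernelProfile_nonneg (s θ : ℝ) {μ : ℝ} (hμ : 0 ≤ μ) : 0 ≤ kernelProfile s θ μ :=
  div_nonneg (rpow_nonneg hμ _) ((sq_nonneg _).trans (sin_sq_le_one_add_two_mul_cos_add_sq θ μ))

lemma kernelProfile_two_rpow_le {s θ : ℝ} (hs : 0 ≤ s) (hθ : sin θ ≠ 0) (t : ℝ) :
    kernelProfile s θ (2 ^ t) ≤ (sin θ ^ 2)⁻¹ * 2 ^ (-(1 - s) * |t|) := by
  have hσ : 0 < sin θ ^ 2 := by positivity
  have hD := sin_sq_le_one_add_two_mul_cos_add_sq θ (2 ^ t)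
  have hnum : ((2 : ℝ) ^ t) ^ (1 - s) = 2 ^ (t * (1 - s)) := by rw [← rpow_mul (by norm_num)]
  rw [kernelProfile, div_le_iff₀ (hσ.trans_le hD), hnum, inv_mul_eq_div,
    div_mul_eq_mul_div, le_div_iff₀ hσ]
  rcases le_total t 0 with ht | ht
  · rw [abs_of_nonpos ht, show -(1 - s) * -t = t * (1 - s) by ring]
    gcongr
  · have hD' := sin_sq_mul_sq_le_one_add_two_mul_cos_add_sq θ (2 ^ t)
    rw [abs_of_nonneg ht]
    have hsq : ((2 : ℝ) ^ t) ^ 2 = 2 ^ (t * 2) := by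
      rw [← rpow_natCast, ← rpow_mul zero_le_two]; norm_num
    calc 2 ^ (t * (1 - s)) * sin θ ^ 2 ≤ 2 ^ (-(1 - s) * t + t * 2) * sin θ ^ 2 := by
          gcongr
          · norm_num
          · nlinarith
      _ = 2 ^ (-(1 - s) * t) * (sin θ ^ 2 * (2 ^ t) ^ 2) := by
          rw [rpow_add zero_lt_two, hsq]; ring
      _ ≤ 2 ^ (-(1 - s) * t) * (1 + 2 * 2 ^ t * cos θ + (2 ^ t) ^ 2) := by gcongr

lemma exists_tsum_enorm_kernelProfile_le {s θ α : ℝ} (hs₀ : 0 ≤ s) (hs₁ : s < 1)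
    (hθ : sin θ ≠ 0) (hα : 0 < α) :
    ∃ C : ℝ≥0,
      (∀ j : ℤ, ∑' i : ℤ, ‖kernelProfile s θ (2 ^ (i * α - j))‖ₑ ≤ C) ∧
      (∀ i : ℤ, ∑' j : ℤ, ‖kernelProfile s θ (2 ^ (i * α - j))‖ₑ ≤ C) := by
  obtain ⟨L₁, hL₁⟩ := exists_tsum_two_rpow_neg_mul_abs_sub_le (sub_pos.2 hs₁) hα
  obtain ⟨L₂, hL₂⟩ := exists_tsum_two_rpow_neg_mul_abs_sub_le (sub_pos.2 hs₁) one_pos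
  set B : ℝ := (sin θ ^ 2)⁻¹
  have hB : 0 ≤ B := by positivity
  have hpt : ∀ j i : ℤ, ‖kernelProfile s θ (2 ^ (i * α - j))‖ₑ ≤
      ENNReal.ofReal B * ENNReal.ofReal (2 ^ (-(1 - s) * |i * α - j|)) := fun j i => by
    rw [Real.enorm_of_nonneg (kernelProfile_nonneg _ _ (by positivity)), ← ENNReal.ofReal_mul hB]
    exact ENNReal.ofReal_le_ofReal (kernelProfile_two_rpow_le hs₀ hθ _)
  refine ⟨B.toNNReal * max L₁ L₂, fun j => ?_, fun i => ?_⟩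
  · calc ∑' i : ℤ, ‖kernelProfile s θ (2 ^ (i * α - j))‖ₑ
        ≤ ∑' i : ℤ, ENNReal.ofReal B * ENNReal.ofReal (2 ^ (-(1 - s) * |i * α - j|)) :=
          ENNReal.tsum_le_tsum (hpt j)
      _ ≤ ENNReal.ofReal B * max L₁ L₂ := by
          rw [ENNReal.tsum_mul_left]
          gcongr
          exact (hL₁ j).trans (by simp)
      _ = _ := by simp [ENNReal.ofReal]
  · calc ∑' j : ℤ, ‖kernelProfile s θ (2 ^ (i * α - j))‖ₑ
        ≤ ∑' j : ℤ, ENNReal.ofReal B * ENNReal.ofReal (2 ^ (-(1 - s) * |j * 1 - i * α|)) := by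
          refine ENNReal.tsum_le_tsum fun j => ?_
          rw [mul_one, abs_sub_comm]
          exact hpt j i
      _ ≤ ENNReal.ofReal B * max L₁ L₂ := by
          rw [ENNReal.tsum_mul_left]
          gcongr
          exact (hL₂ (i * α)).trans (by simp)
      _ = _ := by simp [ENNReal.ofReal]

lemma two_zpow_neg_mul_two_rpow (j : ℤ) (x : ℝ) : (2 : ℝ) ^ (-j) * 2 ^ x = 2 ^ (x - j) := by
  rw [← rpow_intCast, ← rpow_add (by norm_num), Int.cast_neg, neg_add_eq_sub]

theorem stmt_16 (s α : ℝ) (hs0 : 0 < s) (hs1 : s < 1) (hα0 : 0 < α) (hα1 : α < 1)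
    (q : ℝ≥0∞) [Fact (1 ≤ q)]
    (K : ℤ → ℤ → ℝ)
    (hK : ∀ j i : ℤ, K j i =
      ((2 : ℝ) ^ (-j) * (2 : ℝ) ^ ((i : ℝ) * α)) ^ (1 - s) /
        (1 + 2 * ((2 : ℝ) ^ (-j) * (2 : ℝ) ^ ((i : ℝ) * α)) * Real.cos (Real.pi * α) +
          ((2 : ℝ) ^ (-j) * (2 : ℝ) ^ ((i : ℝ) * α)) ^ 2)) :
    ∃ C : ℝ, 0 < C ∧ ∀ a : lp (fun _ : ℤ => ℂ) q,
      (∀ j : ℤ, Summable (fun i : ℤ => (K j i : ℂ) * a i)) ∧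
      ∃ h : (fun j : ℤ => ∑' i : ℤ, (K j i : ℂ) * a i) ∈ lp (fun _ : ℤ => ℂ) q,
        ‖(⟨fun j : ℤ => ∑' i : ℤ, (K j i : ℂ) * a i, h⟩ : lp (fun _ : ℤ => ℂ) q)‖ ≤
          C * ‖a‖ := by
  have hK' : ∀ j i : ℤ, ‖(K j i : ℂ)‖ₑ = ‖kernelProfile s (π * α) (2 ^ (i * α - j))‖ₑ := by
    intro j i
    rw [← ofReal_norm, ← ofReal_norm, Complex.norm_real, hK, two_zpow_neg_mul_two_rpow,
      kernelProfile]
  have hsin : sin (π * α) ≠ 0 :=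
    (sin_pos_of_pos_of_lt_pi (by positivity) (by nlinarith [pi_pos])).ne'
  obtain ⟨C, hrow, hcol⟩ := exists_tsum_enorm_kernelProfile_le hs0.le hs1 hsin hα0
  refine ⟨C + 1, by positivity, fun a => ?_⟩
  obtain ⟨hsum, hmem, hnorm⟩ := lp.schur_test (fun j i => (K j i : ℂ)) (C := C)
    (by simpa only [hK'] using hrow) (by simpa only [hK'] using hcol) a
  exact ⟨hsum, hmem, hnorm.trans (by gcongr; linarith)⟩
end
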